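/- Let d ≥ 1 and let σ : ℝ^d → S^d be differentiable with a bounded and globally Lipschitz derivative, and set C := σ² (pointwise matrix product σ(x)σ(x)). Then C is continuously differentiable with locally Lipschitz derivative, and for every x ∈ ℝ^d and every u ∈ ℝ^d with σ(x)u = 0 one has Σ_{j=1}^d ⟨u, D(σe_j)(x)(σ(x)e_j)⟩ = Σ_{j=1}^d ⟨u, D(Ce_j)(x)(P_C(x)e_j)⟩. -/

import Mathlib

open Matrix Set Asymptotics
open scoped RealInnerProductSpace NNReal

noncomputable section

/-- `ℝ^d` with the Euclidean inner product and norm. -/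
abbrev Vec (d : ℕ) := EuclideanSpace ℝ (Fin d)

/-- real `d × d` matrices. -/
abbrev Mat (d : ℕ) := Matrix (Fin d) (Fin d) ℝ

attribute [local instance] Matrix.seminormedAddCommGroup Matrix.normedAddCommGroup Matrix.normedSpace

/-- The operator-norm seminormed group on `ℝ^d →L[ℝ] Mat d` (port: no longer found automatically,
since `fderiv` now uses the unbundled matrix topology). -/
instance clmSeminormedMat {d : ℕ} : SeminormedAddCommGroup (Vec d →L[ℝ] Mat d) :=
  ContinuousLinearMap.toSeminormedAddCommGroup

/-- A matrix acting on a vector of `ℝ^d`. -/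
def mv {d : ℕ} (A : Mat d) (u : Vec d) : Vec d := WithLp.toLp 2 (A.mulVec u)

/-- The `j`-th canonical basis vector of `ℝ^d`. -/
def evec {d : ℕ} (j : Fin d) : Vec d := EuclideanSpace.single j 1

/-- The first-order normal cone `N¹_D(x)`. -/
def normalCone1 {d : ℕ} (D : Set (Vec d)) (x : Vec d) : Set (Vec d) :=
  {u | ∀ ε > (0:ℝ), ∃ δ > (0:ℝ), ∀ y ∈ D, ‖y - x‖ ≤ δ → ⟪u, y - x⟫ ≤ ε * ‖y - x‖}

/-- The second-order normal cone `N²_D(x) ⊆ ℝ^d × S^d`. -/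
def normalCone2 {d : ℕ} (D : Set (Vec d)) (x : Vec d) : Set (Vec d × Mat d) :=
  {p | p.2.IsSymm ∧ ∀ ε > (0:ℝ), ∃ δ > (0:ℝ), ∀ y ∈ D, ‖y - x‖ ≤ δ →
    ⟪p.1, y - x⟫ + (1/2:ℝ) * ⟪y - x, mv p.2 (y - x)⟫ ≤ ε * ‖y - x‖^2}

/-- The first-order normal cone for subsets of `ℝ`. -/
def normalConeR (D : Set ℝ) (x : ℝ) : Set ℝ :=
  {u | ∀ ε > (0:ℝ), ∃ δ > (0:ℝ), ∀ y ∈ D, |y - x| ≤ δ → u * (y - x) ≤ ε * |y - x|}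

/-- The matrix of the orthogonal projection of `ℝ^d` onto the column space (range) of `A`,
i.e. `A A⁺` with `A⁺` the Moore–Penrose pseudoinverse. -/
def projRange {d : ℕ} (A : Mat d) : Mat d :=
  Matrix.toEuclideanLin.symm
    (((LinearMap.range (Matrix.toEuclideanLin A)).subtypeL.comp
      (Submodule.orthogonalProjectionOnto (LinearMap.range (Matrix.toEuclideanLin A)))).toLinearMap)

/-- The element of `ℝ²` with the two given coordinates. -/
def vec2 (a b : ℝ) : Vec 2 := WithLp.toLp 2 ![a, b]

/-- The Hessian matrix of `φ : ℝ^d → ℝ` at `x`. -/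
def hessMat {d : ℕ} (φ : Vec d → ℝ) (x : Vec d) : Mat d :=
  Matrix.of fun i j => fderiv ℝ (fun y => fderiv ℝ φ y (evec j)) x (evec i)

/-!
Since `Dσ` is Lipschitz, `σ` is `C¹`, and the product rule gives
`DC(x)h = σ(x) Dσ(x)h + Dσ(x)h σ(x)`: a continuous bilinear expression in the locally Lipschitz
maps `σ` and `Dσ`, hence locally Lipschitz.

For the identity write `S = σ(x)`, `T = Dσ(x)`, `P = P_C(x)`. As `S` is symmetric and `Su = 0`,
the term `⟨u, S T(h) e_j⟩` of `DC(x)h e_j` vanishes, so both sides are `⟨u, Σ_j B(A e_j, N e_j)⟩`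
for the bilinear map `B(v, w) = T(v) w`, with `(A, N) = (S, 1)` on the left and `(P, S)` on the
right. Such a sum depends only on `N Aᵀ`, and `S Pᵀ = S` because `range S² = range S`, so that
`P` is the projection onto the range of `S`.
-/

lemma LocallyLipschitz.clm_apply₂ {X E F G : Type*} [PseudoEMetricSpace X]
    [NormedAddCommGroup E] [NormedSpace ℝ E] [NormedAddCommGroup F] [NormedSpace ℝ F]
    [NormedAddCommGroup G] [NormedSpace ℝ G] (B : E →L[ℝ] F →L[ℝ] G) {f : X → E} {g : X → F}
    (hf : LocallyLipschitz f) (hg : LocallyLipschitz g) :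
    LocallyLipschitz fun x => B (f x) (g x) := by
  have hB : ContDiff ℝ 1 fun p : E × F => B p.1 p.2 := B.isBoundedBilinearMap.contDiff
  exact hB.locallyLipschitz.comp (hf.prodMk hg)

section MatrixVector

variable {d : ℕ}

lemma mv_add (A B : Mat d) (v : Vec d) : mv (A + B) v = mv A v + mv B v :=
  map_add (toEuclideanLin.toLinearMap.flip v) A B

lemma mv_mul (A B : Mat d) (v : Vec d) : mv (A * B) v = mv A (mv B v) := by
  simp [mv, mulVec_mulVec]

lemma mv_one (v : Vec d) : mv 1 v = v := by
  simp [mv]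

lemma mv_evec_eq_sum (A : Mat d) (j : Fin d) : mv A (evec j) = ∑ k, A k j • evec k := by
  ext i
  simp [mv, evec, Pi.single_apply]

lemma Matrix.IsSymm.isHermitian {S : Mat d} (hS : S.IsSymm) : S.IsHermitian := by
  rwa [IsHermitian, conjTranspose_eq_transpose_of_trivial]

lemma Matrix.IsSymm.inner_mv_right {S : Mat d} (hS : S.IsSymm) (u v : Vec d) :
    ⟪u, mv S v⟫ = ⟪mv S u, v⟫ :=
  (isSymmetric_toEuclideanLin_iff.mpr hS.isHermitian u v).symm

end MatrixVector

namespace Matrix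

variable {d : ℕ}

lemma toEuclideanLin_projRange (A : Mat d) :
    toEuclideanLin (projRange A) = (LinearMap.range (toEuclideanLin A)).starProjection := by
  rw [projRange, LinearEquiv.apply_symm_apply]
  rfl

lemma mv_projRange (A : Mat d) (v : Vec d) :
    mv (projRange A) v = (LinearMap.range (toEuclideanLin A)).starProjection v :=
  LinearMap.congr_fun (toEuclideanLin_projRange A) v

lemma projRange_mul_self (A : Mat d) : projRange A * A = A := by
  refine toEuclideanLin.injective (LinearMap.ext fun v => ?_)
  change mv (projRange A * A) v = mv A v
  rw [mv_mul, mv_projRange]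
  exact Submodule.starProjection_eq_self_iff.mpr (LinearMap.mem_range_self _ v)

lemma range_toEuclideanLin_mul_conjTranspose_self (A : Mat d) :
    LinearMap.range (toEuclideanLin (A * Aᴴ)) = LinearMap.range (toEuclideanLin A) := by
  rw [← LinearMap.range_self_comp_adjoint (toEuclideanLin A),
    ← toEuclideanLin_conjTranspose_eq_adjoint A]
  congr 1
  exact LinearMap.ext (mv_mul A Aᴴ)

lemma projRange_mul_conjTranspose_self (A : Mat d) : projRange (A * Aᴴ) = projRange A := by
  apply toEuclideanLin.injective
  simp only [toEuclideanLin_projRange, range_toEuclideanLin_mul_conjTranspose_self]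

lemma IsSymm.mul_transpose_projRange_mul_self {S : Mat d} (hS : S.IsSymm) :
    S * (projRange (S * S))ᵀ = S := by
  have hSS : projRange (S * S) = projRange S := by
    simpa only [hS.isHermitian.eq] using projRange_mul_conjTranspose_self S
  simpa only [hSS, transpose_mul, hS.eq] using congrArg (·ᵀ) (projRange_mul_self S)

end Matrix

section Trace

variable {d : ℕ} {M : Type*} [AddCommMonoid M] [Module ℝ M]

lemma sum_apply_mv_evec (B : Vec d →ₗ[ℝ] Vec d →ₗ[ℝ] M) (A N : Mat d) :
    ∑ j, B (mv A (evec j)) (mv N (evec j)) = ∑ k, B (evec k) (mv (N * Aᵀ) (evec k)) := by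
  have hcol : ∀ k, ∑ j, A k j • mv N (evec j) = mv (N * Aᵀ) (evec k) := fun k => by
    rw [mv_mul, mv_evec_eq_sum Aᵀ k]
    change _ = toEuclideanLin N _
    simp only [map_sum, map_smul, transpose_apply]
    rfl
  calc ∑ j, B (mv A (evec j)) (mv N (evec j))
      = ∑ j, ∑ k, A k j • B (evec k) (mv N (evec j)) := by
        simp_rw [mv_evec_eq_sum A, map_sum, map_smul, LinearMap.sum_apply, LinearMap.smul_apply]
    _ = ∑ k, B (evec k) (∑ j, A k j • mv N (evec j)) := by
        rw [Finset.sum_comm]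
        simp_rw [map_sum, map_smul]
    _ = ∑ k, B (evec k) (mv (N * Aᵀ) (evec k)) := by simp_rw [hcol]

lemma sum_apply_mv_evec_eq_of_mul_transpose {S P : Mat d} (hS : S.IsSymm) (hSP : S * Pᵀ = S)
    (B : Vec d →ₗ[ℝ] Vec d →ₗ[ℝ] M) :
    ∑ j, B (mv S (evec j)) (evec j) = ∑ j, B (mv P (evec j)) (mv S (evec j)) := by
  have hS1 := sum_apply_mv_evec B S 1
  simp only [mv_one, one_mul, hS.eq] at hS1
  rw [hS1, sum_apply_mv_evec, hSP]

end Trace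

section Derivatives

variable {d : ℕ}

def mulCLM : Mat d →L[ℝ] Mat d →L[ℝ] Mat d :=
  LinearMap.toContinuousLinearMap
    (LinearMap.toContinuousLinearMap.toLinearMap ∘ₗ LinearMap.mul ℝ (Mat d))

def mvCLM (v : Vec d) : Mat d →L[ℝ] Vec d :=
  LinearMap.toContinuousLinearMap (LinearMap.applyₗ v ∘ₗ toEuclideanLin.toLinearMap)

variable {F G : Vec d → Mat d} {x : Vec d}

lemma fderiv_mv_const_apply (hF : DifferentiableAt ℝ F x) (v h : Vec d) :
    fderiv ℝ (fun y => mv (F y) v) x h = mv (fderiv ℝ F x h) v := by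
  have hmv : HasFDerivAt (fun y => mv (F y) v) ((mvCLM v).comp (fderiv ℝ F x)) x :=
    (mvCLM v).hasFDerivAt.comp x hF.hasFDerivAt
  rw [hmv.fderiv]
  rfl

lemma hasFDerivAt_mul {F' G' : Vec d →L[ℝ] Mat d} (hF : HasFDerivAt F F' x)
    (hG : HasFDerivAt G G' x) :
    HasFDerivAt (fun y => F y * G y)
      (mulCLM.precompR (Vec d) (F x) G' + mulCLM.precompL (Vec d) F' (G x)) x :=
  mulCLM.hasFDerivAt_of_bilinear hF hG

lemma fderiv_mul_apply (hF : DifferentiableAt ℝ F x) (hG : DifferentiableAt ℝ G x) (h : Vec d) :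
    fderiv ℝ (fun y => F y * G y) x h = F x * fderiv ℝ G x h + fderiv ℝ F x h * G x :=
  congrArg (· h) (hasFDerivAt_mul hF.hasFDerivAt hG.hasFDerivAt).fderiv

lemma locallyLipschitz_fderiv_mul (hF : ContDiff ℝ 1 F) (hG : ContDiff ℝ 1 G)
    (hF' : LocallyLipschitz (fderiv ℝ F)) (hG' : LocallyLipschitz (fderiv ℝ G)) :
    LocallyLipschitz (fderiv ℝ fun y => F y * G y) := by
  have hFG : fderiv ℝ (fun y => F y * G y) = fun x =>
      mulCLM.precompR (Vec d) (F x) (fderiv ℝ G x) + mulCLM.precompL (Vec d) (fderiv ℝ F x) (G x) :=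
    funext fun x => (hasFDerivAt_mul (hF.differentiable one_ne_zero x).hasFDerivAt
      (hG.differentiable one_ne_zero x).hasFDerivAt).fderiv
  rw [hFG]
  exact (hF.locallyLipschitz.clm_apply₂ (mulCLM.precompR (Vec d)) hG').add
    (hF'.clm_apply₂ (mulCLM.precompL (Vec d)) hG.locallyLipschitz)

end Derivatives

theorem stmt0 {d : ℕ}
    (σ : Vec d → Mat d) (hσsymm : ∀ x, (σ x).IsSymm)
    (hσdiff : Differentiable ℝ σ)
    (hlip : ∃ K : ℝ≥0, LipschitzWith K (fderiv ℝ σ))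
    (C : Vec d → Mat d) (hC : C = fun x => σ x * σ x) :
    (ContDiff ℝ 1 C ∧ LocallyLipschitz (fderiv ℝ C)) ∧
    ∀ x u : Vec d, mv (σ x) u = 0 →
      ∑ j, ⟪u, fderiv ℝ (fun y => mv (σ y) (evec j)) x (mv (σ x) (evec j))⟫ =
      ∑ j, ⟪u, fderiv ℝ (fun y => mv (C y) (evec j)) x (mv (projRange (C x)) (evec j))⟫ := by
  obtain ⟨K, hK⟩ := hlip
  subst hC
  have hσ : ContDiff ℝ 1 σ := contDiff_one_iff_fderiv.mpr ⟨hσdiff, hK.continuous⟩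
  have hCdiff : Differentiable ℝ fun y => σ y * σ y := fun x =>
    (hasFDerivAt_mul (hσdiff x).hasFDerivAt (hσdiff x).hasFDerivAt).differentiableAt
  have hC' := locallyLipschitz_fderiv_mul hσ hσ hK.locallyLipschitz hK.locallyLipschitz
  refine ⟨⟨contDiff_one_iff_fderiv.mpr ⟨hCdiff, hC'.continuous⟩, hC'⟩, fun x u hu => ?_⟩
  have hu' : ∀ v, ⟪u, mv (σ x) v⟫ = 0 := fun v => by
    rw [(hσsymm x).inner_mv_right, hu, inner_zero_left]
  simp only [fderiv_mv_const_apply (hσdiff x), fderiv_mv_const_apply (hCdiff x),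
    fderiv_mul_apply (hσdiff x) (hσdiff x)]
  simp only [mv_add, mv_mul, inner_add_right, hu', zero_add]
  rw [← inner_sum, ← inner_sum]
  congr 1
  exact sum_apply_mv_evec_eq_of_mul_transpose (hσsymm x)
    (hσsymm x).mul_transpose_projRange_mul_self
    (toEuclideanLin.toLinearMap ∘ₗ (fderiv ℝ σ x).toLinearMap)
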